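/- arXiv:1302.3531 — 2 statements merged into one kernel-verified Lean document; each statement's English description precedes it below -/
import Mathlib

section
/- For every e ∈ (0,1) there exists a constant c̃ > 0 (depending only on e) such that every graphon g with edge density e(g) = e and triangle density t(g) ≤ e³ satisfies I(g) - I₀(e) ≥ c̃·(e³ - t(g))^{2/3}. -/
open MeasureTheory Set

/-- `I₀(u) = (1/2)[u ln u + (1-u) ln(1-u)]`; since `Real.log 0 = 0`,
this automatically satisfies the continuous extension `I₀(0) = I₀(1) = 0`. -/
noncomputable def I0 (u : ℝ) : ℝ :=
  (1/2) * (u * Real.log u + (1 - u) * Real.log (1 - u))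

/-- A graphon: a measurable function `[0,1]² → [0,1]`, symmetric on `[0,1]²`. -/
def IsGraphon (g : ℝ → ℝ → ℝ) : Prop :=
  Measurable (Function.uncurry g) ∧
  (∀ x ∈ Icc (0:ℝ) 1, ∀ y ∈ Icc (0:ℝ) 1, g x y = g y x) ∧
  (∀ x ∈ Icc (0:ℝ) 1, ∀ y ∈ Icc (0:ℝ) 1, g x y ∈ Icc (0:ℝ) 1)

/-- Edge density `e(g) = ∫∫ g`. -/
noncomputable def edgeDensity (g : ℝ → ℝ → ℝ) : ℝ :=
  ∫ x in Icc (0:ℝ) 1, ∫ y in Icc (0:ℝ) 1, g x y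

/-- Triangle density `t(g) = ∫∫∫ g(x,y) g(y,z) g(z,x)`. -/
noncomputable def triangleDensity (g : ℝ → ℝ → ℝ) : ℝ :=
  ∫ x in Icc (0:ℝ) 1, ∫ y in Icc (0:ℝ) 1, ∫ z in Icc (0:ℝ) 1,
    g x y * g y z * g z x

/-- Rate function `I(g) = ∫∫ I₀(g(x,y))`. -/
noncomputable def rateFn (g : ℝ → ℝ → ℝ) : ℝ :=
  ∫ x in Icc (0:ℝ) 1, ∫ y in Icc (0:ℝ) 1, I0 (g x y)

/-!
Write the graphon as `g = e + f`. The Hessian of `I₀` is `1 / (2u(1-u)) ≥ 2`, so `I₀` lies above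
its tangent at `e` plus `(u - e)²`; integrating, and using that `f` has mean zero,
`I(g) - I₀(e) ≥ ‖f‖₂²`. Expanding `t(e + f)` and using the symmetry of `f`, the linear term
vanishes and the quadratic term is `3e ∫ (∫ f(x,y) dy)² dx ≥ 0`, so `e³ - t(g) ≤ -t(f)`.
Finally `t(f) = ∫∫ f(x,y) (∫ f(y,w) f(w,x) dw) dx dy`, and two applications of
Cauchy–Schwarz give `t(f)² ≤ ‖f‖₂⁶`. Hence the theorem holds with `c̃ = 1`.
-/

open Function Real
open scoped unitInterval

lemma I0_eq_neg_binEntropy (u : ℝ) : I0 u = -binEntropy u / 2 := by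
  simp only [I0, binEntropy, log_inv]; ring

lemma continuous_I0 : Continuous I0 := by
  rw [funext I0_eq_neg_binEntropy]; fun_prop

lemma abs_I0_le {u : ℝ} (hu : u ∈ Icc (0:ℝ) 1) : |I0 u| ≤ log 2 / 2 := by
  rw [I0_eq_neg_binEntropy, abs_div, abs_neg, abs_of_nonneg (binEntropy_nonneg hu.1 hu.2),
    abs_two]
  gcongr
  exact binEntropy_le_log_two

lemma hasDerivAt_I0 {u : ℝ} (hu : u ∈ Ioo (0:ℝ) 1) :
    HasDerivAt I0 ((log u - log (1 - u)) / 2) u := by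
  rw [funext I0_eq_neg_binEntropy]
  exact ((hasDerivAt_binEntropy hu.1.ne' hu.2.ne).fun_neg.div_const 2).congr_deriv (by ring)

lemma hasDerivAt_log_sub_log_one_sub {u : ℝ} (hu : u ∈ Ioo (0:ℝ) 1) :
    HasDerivAt (fun t => log t - log (1 - t)) (u⁻¹ + (1 - u)⁻¹) u := by
  have h1 := ((hasDerivAt_id' u).const_sub 1).log (by linarith [hu.2] : (1:ℝ) - u ≠ 0)
  exact ((hasDerivAt_log hu.1.ne').fun_sub h1).congr_deriv (by field_simp; ring)

lemma convexOn_I0_sub_sq : ConvexOn ℝ (Icc 0 1) (fun u => I0 u - u ^ 2) := by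
  refine convexOn_of_hasDerivWithinAt2_nonneg (f' := fun u => (log u - log (1 - u)) / 2 - 2 * u)
    (f'' := fun u => (u⁻¹ + (1 - u)⁻¹) / 2 - 2) (convex_Icc 0 1)
    (continuous_I0.sub (continuous_pow 2)).continuousOn (fun u hu => ?_) (fun u hu => ?_)
    (fun u hu => ?_) <;> rw [interior_Icc] at hu
  · exact ((hasDerivAt_I0 hu).sub (hasDerivAt_pow 2 u)).hasDerivWithinAt.congr_deriv (by ring)
  · exact (((hasDerivAt_log_sub_log_one_sub hu).div_const 2).sub
      ((hasDerivAt_id' u).const_mul 2)).hasDerivWithinAt.congr_deriv (by ring)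
  · obtain ⟨h0, h1⟩ := hu
    have h1' : 0 < 1 - u := by linarith
    have : u⁻¹ + (1 - u)⁻¹ = 1 / (u * (1 - u)) := by field_simp; ring
    rw [this, sub_nonneg, le_div_iff₀ two_pos, le_div_iff₀ (by positivity)]
    nlinarith [sq_nonneg (2 * u - 1)]

lemma ConvexOn.add_mul_sub_le_of_hasDerivAt {S : Set ℝ} {f : ℝ → ℝ} {x y f' : ℝ}
    (hf : ConvexOn ℝ S f) (hx : x ∈ S) (hy : y ∈ S) (hd : HasDerivAt f f' x) :
    f x + f' * (y - x) ≤ f y := by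
  rcases lt_trichotomy x y with hxy | rfl | hyx
  · have := hf.le_slope_of_hasDerivAt hx hy hxy hd
    rw [slope_def_field, le_div_iff₀ (sub_pos.2 hxy)] at this
    linarith
  · simp
  · have := hf.slope_le_of_hasDerivAt hy hx hyx hd
    rw [slope_def_field, div_le_iff₀ (sub_pos.2 hyx)] at this
    linarith

lemma I0_add_sq_le {e u : ℝ} (he : e ∈ Ioo (0:ℝ) 1) (hu : u ∈ Icc (0:ℝ) 1) :
    I0 e + (log e - log (1 - e)) / 2 * (u - e) + (u - e) ^ 2 ≤ I0 u := by
  have := convexOn_I0_sub_sq.add_mul_sub_le_of_hasDerivAt (Ioo_subset_Icc_self he) hu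
    ((hasDerivAt_I0 he).sub (hasDerivAt_pow 2 e))
  nlinarith [this]

lemma abs_sq_le_one {x : ℝ} (hx : |x| ≤ 1) : |x ^ 2| ≤ 1 := by
  rw [abs_pow]; exact pow_le_one₀ (abs_nonneg _) hx

lemma abs_mul_le_one {x y : ℝ} (hx : |x| ≤ 1) (hy : |y| ≤ 1) : |x * y| ≤ 1 := by
  rw [abs_mul]; exact mul_le_one₀ hx (abs_nonneg _) hy

lemma integrable_of_abs_le {β : Type*} [MeasurableSpace β] {ν : Measure β} [IsFiniteMeasure ν]
    {F : β → ℝ} {C : ℝ} (hF : Measurable F) (hC : ∀ b, |F b| ≤ C) : Integrable F ν :=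
  .of_bound hF.aestronglyMeasurable C (ae_of_all _ hC)

lemma Measurable.integral_right {α β : Type*} [MeasurableSpace α] [MeasurableSpace β]
    {ν : Measure β} [SFinite ν] {F : α → β → ℝ} (hF : Measurable (uncurry F)) :
    Measurable fun x => ∫ y, F x y ∂ν :=
  hF.stronglyMeasurable.integral_prod_right.measurable

lemma sq_integral_mul_le {α : Type*} [MeasurableSpace α] {μ : Measure α} {u v : α → ℝ}
    (hu : Integrable (fun a => u a ^ 2) μ) (hv : Integrable (fun a => v a ^ 2) μ)
    (huv : Integrable (fun a => u a * v a) μ) :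
    (∫ a, u a * v a ∂μ) ^ 2 ≤ (∫ a, u a ^ 2 ∂μ) * ∫ a, v a ^ 2 ∂μ := by
  have hquad : ∀ t : ℝ,
      0 ≤ (∫ a, u a ^ 2 ∂μ) * (t * t) + 2 * (∫ a, u a * v a ∂μ) * t + ∫ a, v a ^ 2 ∂μ := by
    intro t
    have hexpand : (fun a => (t * u a + v a) ^ 2)
        = fun a => t ^ 2 * u a ^ 2 + 2 * t * (u a * v a) + v a ^ 2 := by
      ext; ring
    have h : 0 ≤ ∫ a, (t * u a + v a) ^ 2 ∂μ := integral_nonneg fun a => sq_nonneg _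
    rw [hexpand, integral_add ((hu.const_mul _).fun_add (huv.const_mul _)) hv,
      integral_add (hu.const_mul _) (huv.const_mul _), integral_const_mul,
      integral_const_mul] at h
    linarith
  have := discrim_le_zero hquad
  rw [discrim] at this
  linarith

lemma I0_add_integral_sq_sub_le_integral_I0 {β : Type*} [MeasurableSpace β] {ν : Measure β}
    [IsProbabilityMeasure ν] {G : β → ℝ} (hG : Measurable G) (hG01 : ∀ b, G b ∈ Icc 0 1)
    {e : ℝ} (he : e ∈ Ioo (0:ℝ) 1) (hmean : ∫ b, G b ∂ν = e) :
    I0 e + ∫ b, (G b - e) ^ 2 ∂ν ≤ ∫ b, I0 (G b) ∂ν := by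
  have hG1 : ∀ b, |G b - e| ≤ 1 := fun b => abs_sub_le_iff.2
    ⟨by linarith [(hG01 b).2, he.1], by linarith [(hG01 b).1, he.2]⟩
  have hlin : Integrable (fun b => G b - e) ν := integrable_of_abs_le (by fun_prop) hG1
  have hsq : Integrable (fun b => (G b - e) ^ 2) ν :=
    integrable_of_abs_le (by fun_prop) fun b => abs_sq_le_one (hG1 b)
  calc I0 e + ∫ b, (G b - e) ^ 2 ∂ν
      = ∫ b, (I0 e + (log e - log (1 - e)) / 2 * (G b - e) + (G b - e) ^ 2) ∂ν := by
        rw [integral_add ((integrable_const _).fun_add (hlin.const_mul _)) hsq,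
          integral_add (integrable_const _) (hlin.const_mul _), integral_const_mul,
          integral_sub (integrable_of_abs_le hG fun b => (abs_le.2 ⟨by linarith [(hG01 b).1],
            (hG01 b).2⟩)) (integrable_const e), hmean]
        simp
    _ ≤ ∫ b, I0 (G b) ∂ν :=
        integral_mono ((integrable_const _).fun_add (hlin.const_mul _) |>.fun_add hsq)
          (integrable_of_abs_le (continuous_I0.measurable.comp hG) fun b => abs_I0_le (hG01 b))
          fun b => I0_add_sq_le he (hG01 b)

section Kernel

variable {α : Type*} [MeasurableSpace α] {μ : Measure α} [IsProbabilityMeasure μ]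
  {f : α → α → ℝ}

lemma abs_integral_le_of_abs_le {F : α → ℝ} {C : ℝ} (hC : ∀ a, |F a| ≤ C) :
    |∫ a, F a ∂μ| ≤ C := by
  simpa using norm_integral_le_of_norm_le_const (μ := μ) (f := F) (ae_of_all _ hC)

variable (μ) in
noncomputable def triangleIntegral (f : α → α → ℝ) : ℝ :=
  ∫ q, f q.1 q.2.1 * f q.2.1 q.2.2 * f q.2.2 q.1 ∂μ.prod (μ.prod μ)

lemma measurePreserving_rotate :
    MeasurePreserving (MeasurableEquiv.prodComm.trans MeasurableEquiv.prodAssoc :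
      α × α × α ≃ᵐ α × α × α) (μ.prod (μ.prod μ)) (μ.prod (μ.prod μ)) :=
  (measurePreserving_prodAssoc μ μ μ).comp Measure.measurePreserving_swap

lemma integral_comp_rotate (F : α × α × α → ℝ) :
    ∫ q, F (q.2.1, q.2.2, q.1) ∂μ.prod (μ.prod μ) = ∫ q, F q ∂μ.prod (μ.prod μ) :=
  measurePreserving_rotate.integral_comp' F

lemma integrable_comp_rotate {F : α × α × α → ℝ} (hF : Integrable F (μ.prod (μ.prod μ))) :
    Integrable (fun q => F (q.2.1, q.2.2, q.1)) (μ.prod (μ.prod μ)) :=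
  measurePreserving_rotate.integrable_comp_of_integrable hF

lemma integral_prod_prod (F : α × α × α → ℝ) (hF : Integrable F (μ.prod (μ.prod μ))) :
    ∫ q, F q ∂μ.prod (μ.prod μ) = ∫ x, ∫ y, ∫ z, F (x, y, z) ∂μ ∂μ ∂μ := by
  rw [integral_prod F hF]
  exact integral_congr_ae (hF.prod_right_ae.mono fun x hx => integral_prod _ hx)

lemma integral_prod_prod_eq_integral_prod {F : α → α → ℝ} (hF : Measurable (uncurry F))
    (hb : ∀ x y, |F x y| ≤ 1) :
    ∫ q, F q.1 q.2.1 ∂μ.prod (μ.prod μ) = ∫ p, F p.1 p.2 ∂μ.prod μ := by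
  rw [integral_prod _ (integrable_of_abs_le (by fun_prop) fun q => hb _ _),
    integral_prod (fun p : α × α => F p.1 p.2) (integrable_of_abs_le hF fun q => hb _ _)]
  simp [integral_fun_fst]

lemma sq_triangleIntegral_le (hf : Measurable (uncurry f)) (hb : ∀ x y, |f x y| ≤ 1) :
    triangleIntegral μ f ^ 2 ≤ (∫ p, f p.1 p.2 ^ 2 ∂μ.prod μ) ^ 3 := by
  set S := ∫ p, f p.1 p.2 ^ 2 ∂μ.prod μ
  set P : α → α → ℝ := fun a b => ∫ w, f a w * f w b ∂μ
  have hPm : Measurable (uncurry P) :=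
    Measurable.integral_right (F := fun (p : α × α) w => f p.1 w * f w p.2) (by fun_prop)
  have hPb : ∀ a b, |P a b| ≤ 1 := fun a b =>
    abs_integral_le_of_abs_le fun w => abs_mul_le_one (hb _ _) (hb _ _)
  have hT : triangleIntegral μ f = ∫ p, f p.1 p.2 * P p.2 p.1 ∂μ.prod μ := by
    rw [triangleIntegral, ← (measurePreserving_prodAssoc μ μ μ).integral_comp'
      (f := MeasurableEquiv.prodAssoc), integral_prod]
    · simp only [P, ← integral_const_mul, mul_assoc]
      rfl
    · exact integrable_of_abs_le (by fun_prop) fun q =>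
        abs_mul_le_one (abs_mul_le_one (hb _ _) (hb _ _)) (hb _ _)
  have hsq : Integrable (fun p : α × α => f p.1 p.2 ^ 2) (μ.prod μ) :=
    integrable_of_abs_le (by fun_prop) fun p => abs_sq_le_one (hb _ _)
  have hS' : ∫ b, ∫ w, f w b ^ 2 ∂μ ∂μ = S := by
    rw [← integral_prod (fun p : α × α => f p.2 p.1 ^ 2)
      (integrable_of_abs_le (by fun_prop) fun p => abs_sq_le_one (hb _ _))]
    exact integral_prod_swap (fun p : α × α => f p.1 p.2 ^ 2)
  have hPS : ∫ p, P p.1 p.2 ^ 2 ∂μ.prod μ ≤ S * S := calc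
    _ ≤ ∫ p, (∫ w, f p.1 w ^ 2 ∂μ) * ∫ w, f w p.2 ^ 2 ∂μ ∂μ.prod μ := by
      refine integral_mono (integrable_of_abs_le (by fun_prop) fun p => abs_sq_le_one (hPb _ _))
        (integrable_of_abs_le (C := 1) ?_ fun p => ?_) fun p => ?_
      · exact ((Measurable.integral_right (F := fun a w => f a w ^ 2) (by fun_prop)).comp
          measurable_fst).mul
          ((Measurable.integral_right (F := fun b w => f w b ^ 2) (by fun_prop)).comp
          measurable_snd)
      · exact abs_mul_le_one (abs_integral_le_of_abs_le fun w => abs_sq_le_one (hb _ _))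
          (abs_integral_le_of_abs_le fun w => abs_sq_le_one (hb _ _))
      · exact sq_integral_mul_le
          (integrable_of_abs_le (by fun_prop) fun w => abs_sq_le_one (hb _ _))
          (integrable_of_abs_le (by fun_prop) fun w => abs_sq_le_one (hb _ _))
          (integrable_of_abs_le (by fun_prop) fun w => abs_mul_le_one (hb _ _) (hb _ _))
    _ = (∫ a, ∫ w, f a w ^ 2 ∂μ ∂μ) * ∫ b, ∫ w, f w b ^ 2 ∂μ ∂μ :=
      integral_prod_mul (fun a => ∫ w, f a w ^ 2 ∂μ) (fun b => ∫ w, f w b ^ 2 ∂μ)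
    _ = S * S := by rw [hS', ← integral_prod _ hsq]
  have hS0 : 0 ≤ S := integral_nonneg fun p => sq_nonneg _
  calc triangleIntegral μ f ^ 2 ≤ S * ∫ p, P p.2 p.1 ^ 2 ∂μ.prod μ := by
        rw [hT]
        exact sq_integral_mul_le hsq
          (integrable_of_abs_le (by fun_prop) fun p => abs_sq_le_one (hPb _ _))
          (integrable_of_abs_le (by fun_prop) fun p => abs_mul_le_one (hb _ _) (hPb _ _))
    _ = S * ∫ p, P p.1 p.2 ^ 2 ∂μ.prod μ := by
        congr 1; exact integral_prod_swap (fun p : α × α => P p.1 p.2 ^ 2)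
    _ ≤ S * (S * S) := by gcongr
    _ = S ^ 3 := by ring

lemma triangleIntegral_const_add (hf : Measurable (uncurry f)) (hb : ∀ x y, |f x y| ≤ 1)
    (hsymm : ∀ x y, f x y = f y x) (e : ℝ) :
    triangleIntegral μ (fun x y => e + f x y) = e ^ 3 + 3 * e ^ 2 * ∫ p, f p.1 p.2 ∂μ.prod μ
      + 3 * e * ∫ x, (∫ y, f x y ∂μ) ^ 2 ∂μ + triangleIntegral μ f := by
  -- `G` and its two rotations add up to the terms of degree one and two in `f`.
  set G : α × α × α → ℝ := fun q => e ^ 2 * f q.1 q.2.1 + e * (f q.2.2 q.1 * f q.1 q.2.1)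
  have hexpand : ∀ q : α × α × α, (e + f q.1 q.2.1) * (e + f q.2.1 q.2.2) * (e + f q.2.2 q.1)
      = (e ^ 3 + f q.1 q.2.1 * f q.2.1 q.2.2 * f q.2.2 q.1)
        + (G q + G (q.2.1, q.2.2, q.1) + G (q.2.2, q.1, q.2.1)) := by
    intro q; simp only [G]; ring
  have hpath : Integrable (fun q : α × α × α => f q.2.2 q.1 * f q.1 q.2.1) (μ.prod (μ.prod μ)) :=
    integrable_of_abs_le (by fun_prop) fun q => abs_mul_le_one (hb _ _) (hb _ _)
  have hG : Integrable G (μ.prod (μ.prod μ)) :=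
    ((integrable_of_abs_le (by fun_prop) fun q => hb _ _).const_mul _).fun_add
      (hpath.const_mul _)
  have hG' := integrable_comp_rotate hG
  have hG'' := integrable_comp_rotate hG'
  have hT : Integrable (fun q : α × α × α => f q.1 q.2.1 * f q.2.1 q.2.2 * f q.2.2 q.1)
      (μ.prod (μ.prod μ)) :=
    integrable_of_abs_le (by fun_prop) fun q =>
      abs_mul_le_one (abs_mul_le_one (hb _ _) (hb _ _)) (hb _ _)
  have hGint : ∫ q, G q ∂μ.prod (μ.prod μ)
      = e ^ 2 * ∫ p, f p.1 p.2 ∂μ.prod μ + e * ∫ x, (∫ y, f x y ∂μ) ^ 2 ∂μ := by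
    rw [integral_add ((integrable_of_abs_le (by fun_prop) fun q => hb _ _).const_mul _)
      (hpath.const_mul _), integral_const_mul, integral_const_mul,
      integral_prod_prod_eq_integral_prod hf hb, integral_prod _ hpath]
    congr 2
    refine integral_congr_ae (ae_of_all _ fun x => ?_)
    calc ∫ r : α × α, f r.2 x * f x r.1 ∂μ.prod μ = ∫ r : α × α, f x r.1 * f r.2 x ∂μ.prod μ := by
          simp_rw [mul_comm]
      _ = (∫ y, f x y ∂μ) * ∫ z, f z x ∂μ := integral_prod_mul (fun y => f x y) (fun z => f z x)
      _ = (∫ y, f x y ∂μ) ^ 2 := by simp_rw [hsymm _ x, sq]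
  rw [triangleIntegral, integral_congr_ae (ae_of_all _ hexpand),
    integral_add ((integrable_const _).fun_add hT) ((hG.fun_add hG').fun_add hG''),
    integral_add (integrable_const _) hT, integral_add (hG.fun_add hG') hG'',
    integral_add hG hG', integral_comp_rotate G,
    integral_comp_rotate (fun q => G (q.2.1, q.2.2, q.1)), integral_comp_rotate G, hGint]
  simp only [integral_const, probReal_univ, smul_eq_mul, one_mul, triangleIntegral]
  ring

end Kernel

def onUnitInterval (g : ℝ → ℝ → ℝ) : I → I → ℝ := fun x y => g x y

lemma setIntegral_Icc_eq_integral_unitInterval (F : ℝ → ℝ) :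
    ∫ x in Icc (0:ℝ) 1, F x = ∫ x : I, F x :=
  (unitInterval.measurePreserving_coe.integral_comp unitInterval.measurableEmbedding_coe F).symm

namespace IsGraphon

variable {g : ℝ → ℝ → ℝ} (hg : IsGraphon g)
include hg

lemma measurable_onUnitInterval : Measurable (uncurry (onUnitInterval g)) :=
  hg.1.comp (measurable_subtype_coe.prodMap measurable_subtype_coe)

lemma onUnitInterval_comm (x y : I) : onUnitInterval g x y = onUnitInterval g y x :=
  hg.2.1 x x.2 y y.2

lemma onUnitInterval_mem_Icc (x y : I) : onUnitInterval g x y ∈ Icc 0 1 :=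
  hg.2.2 x x.2 y y.2

lemma abs_onUnitInterval_le (x y : I) : |onUnitInterval g x y| ≤ 1 :=
  abs_le.2 ⟨by linarith [(hg.onUnitInterval_mem_Icc x y).1], (hg.onUnitInterval_mem_Icc x y).2⟩

lemma integrable_onUnitInterval :
    Integrable (fun p : I × I => onUnitInterval g p.1 p.2) (volume.prod volume) :=
  integrable_of_abs_le hg.measurable_onUnitInterval fun p => hg.abs_onUnitInterval_le p.1 p.2

lemma edgeDensity_eq : edgeDensity g = ∫ p, onUnitInterval g p.1 p.2 ∂volume.prod volume := by
  rw [integral_prod _ hg.integrable_onUnitInterval]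
  simp only [edgeDensity, setIntegral_Icc_eq_integral_unitInterval]
  rfl

lemma rateFn_eq : rateFn g = ∫ p, I0 (onUnitInterval g p.1 p.2) ∂volume.prod volume := by
  rw [integral_prod (fun p : I × I => I0 (onUnitInterval g p.1 p.2))
    (integrable_of_abs_le (continuous_I0.measurable.comp
    hg.measurable_onUnitInterval) fun p => abs_I0_le (hg.onUnitInterval_mem_Icc p.1 p.2))]
  simp only [rateFn, setIntegral_Icc_eq_integral_unitInterval]
  rfl

lemma triangleDensity_eq : triangleDensity g = triangleIntegral volume (onUnitInterval g) := by
  rw [triangleIntegral, integral_prod_prod _ (integrable_of_abs_le (by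
    have := hg.measurable_onUnitInterval; fun_prop) fun q => abs_mul_le_one
    (abs_mul_le_one (hg.abs_onUnitInterval_le _ _) (hg.abs_onUnitInterval_le _ _))
    (hg.abs_onUnitInterval_le _ _))]
  simp only [triangleDensity, setIntegral_Icc_eq_integral_unitInterval]
  rfl

lemma abs_onUnitInterval_sub_le {e : ℝ} (he : e ∈ Icc (0:ℝ) 1) (x y : I) :
    |onUnitInterval g x y - e| ≤ 1 :=
  abs_sub_le_iff.2 ⟨by linarith [(hg.onUnitInterval_mem_Icc x y).2, he.1],
    by linarith [(hg.onUnitInterval_mem_Icc x y).1, he.2]⟩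

lemma I0_add_integral_sq_sub_le_rateFn {e : ℝ} (he : e ∈ Ioo (0:ℝ) 1) (hE : edgeDensity g = e) :
    I0 e + ∫ p, (onUnitInterval g p.1 p.2 - e) ^ 2 ∂volume.prod volume ≤ rateFn g :=
  hg.rateFn_eq ▸ I0_add_integral_sq_sub_le_integral_I0 hg.measurable_onUnitInterval
    (fun p => hg.onUnitInterval_mem_Icc p.1 p.2) he (hg.edgeDensity_eq ▸ hE)

lemma triangleDensity_eq_cube_add {e : ℝ} (he : e ∈ Icc (0:ℝ) 1) (hE : edgeDensity g = e) :
    triangleDensity g = e ^ 3 + 3 * e * (∫ x, (∫ y, onUnitInterval g x y - e) ^ 2)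
      + triangleIntegral volume (fun x y => onUnitInterval g x y - e) := by
  have hmean : ∫ p, (onUnitInterval g p.1 p.2 - e) ∂volume.prod volume = 0 := by
    rw [integral_sub hg.integrable_onUnitInterval (integrable_const e), ← hg.edgeDensity_eq, hE]
    simp
  have hg_eq : onUnitInterval g = fun x y => e + (onUnitInterval g x y - e) := by
    ext; ring
  rw [hg.triangleDensity_eq, hg_eq, triangleIntegral_const_add
    (hg.measurable_onUnitInterval.sub measurable_const) (hg.abs_onUnitInterval_sub_le he)
    (fun x y => by rw [hg.onUnitInterval_comm x y]) e, ← hg_eq, hmean]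
  ring

end IsGraphon

lemma rpow_two_thirds_le_of_sq_le_cube {x S : ℝ} (hx : 0 ≤ x) (hS : 0 ≤ S)
    (h : x ^ 2 ≤ S ^ 3) : x ^ ((2:ℝ) / 3) ≤ S := calc
  x ^ ((2:ℝ) / 3) = (x ^ 2) ^ ((1:ℝ) / 3) := by
    rw [← rpow_natCast, ← rpow_mul hx]; norm_num
  _ ≤ (S ^ 3) ^ ((1:ℝ) / 3) := by gcongr
  _ = S := by rw [← rpow_natCast, ← rpow_mul hS]; norm_num

/-- For every `e ∈ (0,1)` there is `c̃ > 0` such that every graphon `g` with edge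
density `e` and triangle density `t(g) ≤ e³` satisfies
`I(g) - I₀(e) ≥ c̃ (e³ - t(g))^{2/3}`. -/
theorem entropy_two_thirds_bound (e : ℝ) (he : e ∈ Ioo (0:ℝ) 1) :
    ∃ c : ℝ, 0 < c ∧ ∀ g : ℝ → ℝ → ℝ, IsGraphon g → edgeDensity g = e →
      triangleDensity g ≤ e ^ 3 →
      rateFn g - I0 e ≥ c * (e ^ 3 - triangleDensity g) ^ ((2:ℝ)/3) := by
  refine ⟨1, one_pos, fun g hg hE hT => ?_⟩
  set f : I → I → ℝ := fun x y => onUnitInterval g x y - e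
  have hrate := hg.I0_add_integral_sq_sub_le_rateFn he hE
  have htri := hg.triangleDensity_eq_cube_add (Ioo_subset_Icc_self he) hE
  have hcube := sq_triangleIntegral_le (μ := volume) (f := f)
    (hg.measurable_onUnitInterval.sub measurable_const)
    (hg.abs_onUnitInterval_sub_le (Ioo_subset_Icc_self he))
  have hQ : 0 ≤ e * ∫ x, (∫ y, f x y) ^ 2 :=
    mul_nonneg he.1.le (integral_nonneg fun _ => sq_nonneg _)
  rw [one_mul, ge_iff_le]
  refine (rpow_two_thirds_le_of_sq_le_cube (sub_nonneg.2 hT)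
    (integral_nonneg fun _ => sq_nonneg _) (hcube.trans' ?_)).trans (by linarith)
  calc (e ^ 3 - triangleDensity g) ^ 2 ≤ (-triangleIntegral volume f) ^ 2 :=
        pow_le_pow_left₀ (sub_nonneg.2 hT) (by linarith) 2
    _ = triangleIntegral volume f ^ 2 := neg_sq _
end

section
/- Every graphon g with edge density e = e(g) satisfies t(g) - e³ ≤ (3e + 1)·∫_{[0,1]²} (g(x,y) - e)² dx dy. -/
open MeasureTheory Set

/-!
Write `g = e + f` with `e` the edge density, so that `∫∫ f = 0`. For `a = f(x,y)`, `b = f(y,z)`,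
`c = f(z,x)` one has `e (ab + bc + ca) ≤ e (a² + b² + c²)` and, since `|c| ≤ 1`,
`abc ≤ (a² + b²)/2`. Expanding `(e + a)(e + b)(e + c)` and integrating over `x, y, z`, every term
linear in `f` vanishes and, because the edge projections `(x,y,z) ↦ (x,y), (y,z), (z,x)` are
measure preserving, each square integrates to `∫∫ f²`, leaving
`t(g) ≤ e³ + ((e + 1/2) + (e + 1/2) + e) ∫∫ f²`.
-/

theorem mul_mul_le_of_abs_le_one {e a b c : ℝ} (he : 0 ≤ e) (hc : |c| ≤ 1) :
    (e + a) * (e + b) * (e + c) ≤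
      e ^ 3 + (e ^ 2 * a + (e + 1 / 2) * a ^ 2) + (e ^ 2 * b + (e + 1 / 2) * b ^ 2)
        + (e ^ 2 * c + e * c ^ 2) := by
  have hquad : e * (a * b + b * c + c * a) ≤ e * (a ^ 2 + b ^ 2 + c ^ 2) := by
    nlinarith [mul_nonneg he (sq_nonneg (a - b)), mul_nonneg he (sq_nonneg (b - c)),
      mul_nonneg he (sq_nonneg (c - a))]
  have hcubic : a * b * c ≤ (a ^ 2 + b ^ 2) / 2 :=
    calc a * b * c ≤ |a * b| * |c| := by rw [← abs_mul]; exact le_abs_self _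
      _ ≤ |a * b| := mul_le_of_le_one_right (abs_nonneg _) hc
      _ ≤ (a ^ 2 + b ^ 2) / 2 := by
        rw [abs_mul]; nlinarith [sq_nonneg (|a| - |b|), sq_abs a, sq_abs b]
  nlinarith

theorem MeasureTheory.MeasurePreserving.integral_comp_of_aestronglyMeasurable
    {α β E : Type*} [MeasurableSpace α] [MeasurableSpace β] [NormedAddCommGroup E]
    [NormedSpace ℝ E] {μ : Measure α} {ν : Measure β} {π : α → β}
    (hπ : MeasurePreserving π μ ν) {F : β → E} (hF : AEStronglyMeasurable F ν) :
    ∫ x, F (π x) ∂μ = ∫ y, F y ∂ν := by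
  rw [← hπ.map_eq] at hF ⊢
  exact (integral_map hπ.aemeasurable hF).symm

theorem sq_sub_mem_Icc {a b : ℝ} (ha : a ∈ Icc (0 : ℝ) 1) (hb : b ∈ Icc (0 : ℝ) 1) :
    (a - b) ^ 2 ∈ Icc (0 : ℝ) 1 :=
  ⟨sq_nonneg _, (sq_le_one_iff_abs_le_one _).2 (abs_sub_le_of_nonneg_of_le ha.1 ha.2 hb.1 hb.2)⟩

theorem integrable_of_ae_mem_Icc {α : Type*} [MeasurableSpace α] {μ : Measure α}
    [IsFiniteMeasure μ] {f : α → ℝ} (hf : AEStronglyMeasurable f μ)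
    (hf01 : ∀ᵐ x ∂μ, f x ∈ Icc (0 : ℝ) 1) : Integrable f μ :=
  .of_bound hf 1 (hf01.mono fun x hx => by
    rw [Real.norm_eq_abs, abs_of_nonneg hx.1]; exact hx.2)

theorem MeasureTheory.MeasurePreserving.integral_mul_add_mul_sq {β γ : Type*}
    [MeasurableSpace β] [MeasurableSpace γ] {μ : Measure β} {ν : Measure γ} {π : β → γ}
    (hπ : MeasurePreserving π μ ν) {f : γ → ℝ} (hf : Integrable f ν)
    (hf2 : Integrable (fun y => f y ^ 2) ν) (hmean : ∫ y, f y ∂ν = 0) (c w : ℝ) :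
    ∫ x, (c * f (π x) + w * f (π x) ^ 2) ∂μ = w * ∫ y, f y ^ 2 ∂ν := by
  rw [hπ.integral_comp_of_aestronglyMeasurable (F := fun y => c * f y + w * f y ^ 2)
      ((hf.const_mul c).add (hf2.const_mul w)).aestronglyMeasurable,
    integral_add (hf.const_mul c) (hf2.const_mul w), integral_const_mul, integral_const_mul,
    hmean, mul_zero, zero_add]

section ProbabilitySpace

variable {α : Type*} [MeasurableSpace α] {μ : Measure α} [IsProbabilityMeasure μ]

theorem integral_mem_Icc_of_ae_mem_Icc {f : α → ℝ} (hf : ∀ᵐ x ∂μ, f x ∈ Icc (0 : ℝ) 1) :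
    ∫ x, f x ∂μ ∈ Icc (0 : ℝ) 1 := by
  refine ⟨integral_nonneg_of_ae (hf.mono fun x hx => hx.1), ?_⟩
  calc ∫ x, f x ∂μ ≤ ∫ _, (1 : ℝ) ∂μ :=
        integral_mono_of_nonneg (hf.mono fun x hx => hx.1) (integrable_const 1)
          (hf.mono fun x hx => hx.2)
    _ = 1 := by simp

theorem measurePreserving_xy :
    MeasurePreserving (fun p : α × α × α => (p.1, p.2.1)) (μ.prod (μ.prod μ)) (μ.prod μ) :=
  (MeasurePreserving.id μ).prod measurePreserving_fst

theorem measurePreserving_yz :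
    MeasurePreserving (fun p : α × α × α => p.2) (μ.prod (μ.prod μ)) (μ.prod μ) :=
  measurePreserving_snd

theorem measurePreserving_zx :
    MeasurePreserving (fun p : α × α × α => (p.2.2, p.1)) (μ.prod (μ.prod μ)) (μ.prod μ) :=
  Measure.measurePreserving_swap.comp ((MeasurePreserving.id μ).prod measurePreserving_snd)

theorem ae_triangle_mem_Icc {G : α × α → ℝ} (hG01 : ∀ᵐ q ∂μ.prod μ, G q ∈ Icc (0 : ℝ) 1) :
    ∀ᵐ p ∂μ.prod (μ.prod μ), G (p.1, p.2.1) * G p.2 * G (p.2.2, p.1) ∈ Icc (0 : ℝ) 1 := by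
  filter_upwards [measurePreserving_xy.quasiMeasurePreserving.ae hG01,
    measurePreserving_yz.quasiMeasurePreserving.ae hG01,
    measurePreserving_zx.quasiMeasurePreserving.ae hG01] with p hxy hyz hzx
  exact ⟨mul_nonneg (mul_nonneg hxy.1 hyz.1) hzx.1,
    mul_le_one₀ (mul_le_one₀ hxy.2 hyz.1 hyz.2) hzx.1 hzx.2⟩

theorem ae_triangle_le {G : α × α → ℝ} {e : ℝ} (he : 0 ≤ e)
    (hdev : ∀ᵐ q ∂μ.prod μ, |G q - e| ≤ 1) :
    ∀ᵐ p ∂μ.prod (μ.prod μ), G (p.1, p.2.1) * G p.2 * G (p.2.2, p.1) ≤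
      e ^ 3 + (e ^ 2 * (G (p.1, p.2.1) - e) + (e + 1 / 2) * (G (p.1, p.2.1) - e) ^ 2)
        + (e ^ 2 * (G p.2 - e) + (e + 1 / 2) * (G p.2 - e) ^ 2)
        + (e ^ 2 * (G (p.2.2, p.1) - e) + e * (G (p.2.2, p.1) - e) ^ 2) := by
  filter_upwards [measurePreserving_zx.quasiMeasurePreserving.ae hdev] with p hzx
  calc _ = (e + (G (p.1, p.2.1) - e)) * (e + (G p.2 - e)) * (e + (G (p.2.2, p.1) - e)) := by
        ring
    _ ≤ _ := mul_mul_le_of_abs_le_one he hzx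

theorem integral_triangle_sub_cube_le {G : α × α → ℝ} (hG : AEStronglyMeasurable G (μ.prod μ))
    (hG01 : ∀ᵐ q ∂μ.prod μ, G q ∈ Icc (0 : ℝ) 1) {e : ℝ} (he : ∫ q, G q ∂μ.prod μ = e) :
    ∫ p, G (p.1, p.2.1) * G p.2 * G (p.2.2, p.1) ∂μ.prod (μ.prod μ) - e ^ 3 ≤
      (3 * e + 1) * ∫ q, (G q - e) ^ 2 ∂μ.prod μ := by
  set ν := μ.prod μ
  set S := ∫ q, (G q - e) ^ 2 ∂ν
  have he01 : e ∈ Icc (0 : ℝ) 1 := he ▸ integral_mem_Icc_of_ae_mem_Icc hG01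
  have hG_int : Integrable G ν := integrable_of_ae_mem_Icc hG hG01
  have hdev_int : Integrable (fun q => G q - e) ν := hG_int.sub (integrable_const e)
  have hdev_sq_int : Integrable (fun q => (G q - e) ^ 2) ν :=
    integrable_of_ae_mem_Icc ((hG.sub aestronglyMeasurable_const).pow 2)
      (hG01.mono fun q hq => sq_sub_mem_Icc hq he01)
  have hmean : ∫ q, (G q - e) ∂ν = 0 := by
    rw [integral_sub hG_int (integrable_const e), he, integral_const]; simp
  let k : ℝ → α × α → ℝ := fun w q => e ^ 2 * (G q - e) + w * (G q - e) ^ 2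
  have hk_comp {π : α × α × α → α × α} (hπ : MeasurePreserving π (μ.prod ν) ν) (w : ℝ) :
      Integrable (fun p => k w (π p)) (μ.prod ν) ∧ ∫ p, k w (π p) ∂μ.prod ν = w * S :=
    ⟨hπ.integrable_comp_of_integrable ((hdev_int.const_mul _).add (hdev_sq_int.const_mul _)),
      hπ.integral_mul_add_mul_sq hdev_int hdev_sq_int hmean _ _⟩
  obtain ⟨hxy_int, hxy⟩ := hk_comp measurePreserving_xy (e + 1 / 2)
  obtain ⟨hyz_int, hyz⟩ := hk_comp measurePreserving_yz (e + 1 / 2)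
  obtain ⟨hzx_int, hzx⟩ := hk_comp measurePreserving_zx e
  have hsum₂ : Integrable (fun p => e ^ 3 + k (e + 1 / 2) (p.1, p.2.1)) (μ.prod ν) :=
    (integrable_const _).add hxy_int
  have hsum₃ : Integrable (fun p => e ^ 3 + k (e + 1 / 2) (p.1, p.2.1) + k (e + 1 / 2) p.2)
      (μ.prod ν) :=
    hsum₂.add hyz_int
  have htriangle :
      ∫ p, G (p.1, p.2.1) * G p.2 * G (p.2.2, p.1) ∂μ.prod ν ≤ e ^ 3 + (3 * e + 1) * S :=
    calc _ ≤ ∫ p, e ^ 3 + k (e + 1 / 2) (p.1, p.2.1) + k (e + 1 / 2) p.2 + k e (p.2.2, p.1)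
          ∂μ.prod ν :=
          integral_mono_of_nonneg ((ae_triangle_mem_Icc hG01).mono fun p hp => hp.1)
            (hsum₃.add hzx_int) (ae_triangle_le he01.1
              (hG01.mono fun q hq => abs_sub_le_of_nonneg_of_le hq.1 hq.2 he01.1 he01.2))
      _ = e ^ 3 + (3 * e + 1) * S := by
        rw [integral_add hsum₃ hzx_int, integral_add hsum₂ hyz_int,
          integral_add (integrable_const _) hxy_int, hxy, hyz, hzx, integral_const]
        simp only [probReal_univ, one_smul]
        ring
  linarith

theorem integral_integral_triangle_sub_cube_le {g : α → α → ℝ}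
    (hg : AEStronglyMeasurable (Function.uncurry g) (μ.prod μ))
    (hg01 : ∀ᵐ q ∂μ.prod μ, Function.uncurry g q ∈ Icc (0 : ℝ) 1) :
    (∫ x, ∫ y, ∫ z, g x y * g y z * g z x ∂μ ∂μ ∂μ) - (∫ x, ∫ y, g x y ∂μ ∂μ) ^ 3 ≤
      (3 * ∫ x, ∫ y, g x y ∂μ ∂μ + 1) *
        ∫ x, ∫ y, (g x y - ∫ x, ∫ y, g x y ∂μ ∂μ) ^ 2 ∂μ ∂μ := by
  set e := ∫ x, ∫ y, g x y ∂μ ∂μ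
  have he : ∫ q, Function.uncurry g q ∂μ.prod μ = e :=
    integral_prod _ (integrable_of_ae_mem_Icc hg hg01)
  have he01 : e ∈ Icc (0 : ℝ) 1 := he ▸ integral_mem_Icc_of_ae_mem_Icc hg01
  have hS : ∫ q, (Function.uncurry g q - e) ^ 2 ∂μ.prod μ = ∫ x, ∫ y, (g x y - e) ^ 2 ∂μ ∂μ :=
    integral_prod _ (integrable_of_ae_mem_Icc ((hg.sub aestronglyMeasurable_const).pow 2)
      (hg01.mono fun q hq => sq_sub_mem_Icc hq he01))
  have htriangle_int : Integrable (fun p : α × α × α => g p.1 p.2.1 * g p.2.1 p.2.2 * g p.2.2 p.1)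
      (μ.prod (μ.prod μ)) :=
    integrable_of_ae_mem_Icc (((hg.comp_measurePreserving measurePreserving_xy).mul
      (hg.comp_measurePreserving measurePreserving_yz)).mul
      (hg.comp_measurePreserving measurePreserving_zx)) (ae_triangle_mem_Icc hg01)
  have htriangle : ∫ p, g p.1 p.2.1 * g p.2.1 p.2.2 * g p.2.2 p.1 ∂μ.prod (μ.prod μ) =
      ∫ x, ∫ y, ∫ z, g x y * g y z * g z x ∂μ ∂μ ∂μ := by
    rw [integral_prod _ htriangle_int]
    exact integral_congr_ae (htriangle_int.prod_right_ae.mono fun x hx => integral_prod _ hx)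
  rw [← htriangle, ← hS]
  exact integral_triangle_sub_cube_le hg hg01 he

end ProbabilitySpace

/-- Every graphon `g` with edge density `e` satisfies
`t(g) - e³ ≤ (3e + 1) ∫∫ (g - e)²`. -/
theorem triangle_density_upper_bound (g : ℝ → ℝ → ℝ) (hg : IsGraphon g) :
    triangleDensity g - (edgeDensity g) ^ 3 ≤
      (3 * edgeDensity g + 1) *
        ∫ x in Icc (0:ℝ) 1, ∫ y in Icc (0:ℝ) 1, (g x y - edgeDensity g) ^ 2 := by
  obtain ⟨hmeas, -, hg01⟩ := hg
  have : IsProbabilityMeasure (volume.restrict (Icc (0 : ℝ) 1)) := ⟨by simp⟩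
  refine integral_integral_triangle_sub_cube_le hmeas.aestronglyMeasurable ?_
  rw [Measure.prod_restrict]
  exact ae_restrict_of_forall_mem (measurableSet_Icc.prod measurableSet_Icc)
    fun q hq => hg01 _ hq.1 _ hq.2
end
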